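/- Let d = gcd(n, j, k) and suppose d > 1. Then for each q with 0 ≤ q ≤ d-1, setting l = qn/d gives λ_l^+ = cos(2πjl/n) + cos(2πkl/n) + sqrt((cos(2πjl/n) - cos(2πkl/n))² + 1) = 3. Hence 3 is an eigenvalue of I(n,j,k) with multiplicity at least d. -/

import Mathlib

open Matrix Polynomial

open Matrix

/-- The I-graph `I(n,j,k)`: vertices are `ZMod n ⊕ ZMod n`, where `Sum.inl i`
represents `b_i` and `Sum.inr i` represents `a_i`; edges are `{b_i, b_{i+k}}`,
`{a_i, a_{i+j}}` and `{a_i, b_i}` (indices mod `n`). -/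
def IGraph (n j k : ℕ) : SimpleGraph (ZMod n ⊕ ZMod n) where
  Adj x y :=
    match x, y with
    | .inl i, .inl i' => i ≠ i' ∧ (i' - i = (k : ZMod n) ∨ i - i' = (k : ZMod n))
    | .inr i, .inr i' => i ≠ i' ∧ (i' - i = (j : ZMod n) ∨ i - i' = (j : ZMod n))
    | .inl i, .inr i' => i = i'
    | .inr i, .inl i' => i = i'
  symm := by
    refine ⟨?_⟩
    rintro (i | i) (i' | i') h
    · exact ⟨h.1.symm, h.2.symm⟩
    · exact h.symm
    · exact h.symm
    · exact ⟨h.1.symm, h.2.symm⟩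
  loopless := by
    refine ⟨?_⟩
    rintro (i | i) h <;> exact h.1 rfl

instance (n j k : ℕ) : DecidableRel (IGraph n j k).Adj := fun x y =>
  match x, y with
  | .inl i, .inl i' =>
      inferInstanceAs (Decidable (i ≠ i' ∧ (i' - i = (k : ZMod n) ∨ i - i' = (k : ZMod n))))
  | .inr i, .inr i' =>
      inferInstanceAs (Decidable (i ≠ i' ∧ (i' - i = (j : ZMod n) ∨ i - i' = (j : ZMod n))))
  | .inl i, .inr i' => inferInstanceAs (Decidable (i = i'))
  | .inr i, .inl i' => inferInstanceAs (Decidable (i = i'))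



open scoped RealInnerProductSpace


lemma my_charpoly_conj {m : Type*} [Fintype m] [DecidableEq m]
    (U D V : Matrix m m ℝ) (hUV : U * V = 1) :
    (U * D * V).charpoly = D.charpoly := by
  have hmapUV : (C.mapMatrix U) * (C.mapMatrix V) = 1 := by
    rw [← _root_.map_mul, hUV, _root_.map_one]
  have hchar : charmatrix (U * D * V) = (C.mapMatrix U) * charmatrix D * (C.mapMatrix V) := by
    unfold charmatrix
    rw [mul_sub, sub_mul, _root_.map_mul, _root_.map_mul]
    congr 1
    rw [← (Matrix.scalar_commute (X : Polynomial ℝ) (fun r' => Commute.all _ r') (C.mapMatrix U)).eq, mul_assoc, hmapUV, mul_one]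
  unfold Matrix.charpoly
  rw [hchar, det_mul, det_mul, mul_right_comm, ← det_mul, hmapUV, det_one, one_mul]

lemma my_charpoly_diagonal {m : Type*} [Fintype m] [DecidableEq m] (v : m → ℝ) :
    (Matrix.diagonal v).charpoly = ∏ i, (X - C (v i)) := by
  unfold Matrix.charpoly
  have h : charmatrix (Matrix.diagonal v) = Matrix.diagonal (fun i => X - C (v i)) := by
    ext i j
    by_cases hij : i = j
    · subst hij; simp
    · rw [charmatrix_apply_ne _ _ _ hij, Matrix.diagonal_apply_ne _ hij,
        Matrix.diagonal_apply_ne _ hij, map_zero, neg_zero]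
  rw [h, det_diagonal]

lemma my_rootMult {m : Type*} [Fintype m] (v : m → ℝ) (μ : ℝ) :
    (∏ i, (X - C (v i))).rootMultiplicity μ
      = (Finset.univ.filter fun i => v i = μ).card := by
  rw [← Polynomial.count_roots]
  have h1 : (∏ i, (X - C (v i)))
      = ((Finset.univ.val.map v).map fun a => X - C a).prod := by
    rw [Multiset.map_map]; rfl
  rw [h1, Polynomial.roots_multiset_prod_X_sub_C, Multiset.count_map]
  rw [Finset.card, Finset.filter_val]
  exact congrArg Multiset.card (Multiset.filter_congr fun x _ => ⟨Eq.symm, Eq.symm⟩)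



lemma my_geom_le {m : Type*} [Fintype m] [DecidableEq m]
    (A : Matrix m m ℝ) (hA : A.IsHermitian) (μ : ℝ)
    {ι : Type*} [Fintype ι] (w : ι → m → ℝ) (hw : LinearIndependent ℝ w)
    (heig : ∀ c, A *ᵥ w c = μ • w c) :
    Fintype.card ι ≤ (Finset.univ.filter fun i => hA.eigenvalues i = μ).card := by
  classical
  set b := hA.eigenvectorBasis with hb
  set T := (Finset.univ.filter fun i => hA.eigenvalues i = μ) with hT
  have hAT : Aᵀ = A := by
    rw [← Matrix.conjTranspose_eq_transpose_of_trivial]; exact hA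
  let e : EuclideanSpace ℝ m ≃ₗ[ℝ] (m → ℝ) := WithLp.linearEquiv 2 ℝ (m → ℝ)
  let w' : ι → EuclideanSpace ℝ m := fun c => e.symm (w c)
  have hw' : LinearIndependent ℝ w' := by
    have := hw.map' e.symm.toLinearMap e.symm.ker
    exact this
  have hinner : ∀ (c : ι) (i : m), (inner ℝ (b i) (w' c) : ℝ) = ⇑(b i) ⬝ᵥ w c := by
    intro c i
    simp [PiLp.inner_apply, dotProduct, w', e, RCLike.inner_apply, starRingEnd_apply]
    exact Finset.sum_congr rfl fun x _ => mul_comm _ _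
  have hmem : ∀ c, w' c ∈ Submodule.span ℝ ((T.image fun i => (b i : EuclideanSpace ℝ m)) : Set (EuclideanSpace ℝ m)) := by
    intro c
    rw [← b.sum_repr (w' c)]
    refine Submodule.sum_mem _ fun i _ => ?_
    by_cases hi : i ∈ T
    · exact Submodule.smul_mem _ _
        (Submodule.subset_span (Finset.mem_coe.2 (Finset.mem_image_of_mem _ hi)))
    · have hiμ : hA.eigenvalues i ≠ μ := by
        simpa [hT] using hi
      have key : hA.eigenvalues i * (⇑(b i) ⬝ᵥ w c) = μ * (⇑(b i) ⬝ᵥ w c) := by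
        calc hA.eigenvalues i * (⇑(b i) ⬝ᵥ w c)
            = (hA.eigenvalues i • ⇑(b i)) ⬝ᵥ w c := by rw [smul_dotProduct, smul_eq_mul]
          _ = (A *ᵥ ⇑(b i)) ⬝ᵥ w c := by rw [hA.mulVec_eigenvectorBasis]
          _ = w c ⬝ᵥ (A *ᵥ ⇑(b i)) := dotProduct_comm _ _
          _ = (w c ᵥ* A) ⬝ᵥ ⇑(b i) := dotProduct_mulVec _ _ _
          _ = (Aᵀ *ᵥ w c) ⬝ᵥ ⇑(b i) := by rw [mulVec_transpose]
          _ = (μ • w c) ⬝ᵥ ⇑(b i) := by rw [hAT, heig]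
          _ = μ * (w c ⬝ᵥ ⇑(b i)) := by rw [smul_dotProduct, smul_eq_mul]
          _ = μ * (⇑(b i) ⬝ᵥ w c) := by rw [dotProduct_comm]
      have hzero : ⇑(b i) ⬝ᵥ w c = 0 := by
        by_contra h
        exact hiμ (mul_right_cancel₀ h key)
      have : b.repr (w' c) i = 0 := by
        rw [b.repr_apply_apply, hinner, hzero]
      rw [this, zero_smul]
      exact Submodule.zero_mem _
  calc Fintype.card ι
      = Module.finrank ℝ (Submodule.span ℝ (Set.range w')) := (finrank_span_eq_card hw').symm
    _ ≤ Module.finrank ℝ (Submodule.span ℝ ((T.image fun i => (b i : EuclideanSpace ℝ m)) : Set (EuclideanSpace ℝ m))) :=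
        Submodule.finrank_mono (Submodule.span_le.2 (Set.range_subset_iff.2 hmem))
    _ ≤ (T.image fun i => (b i : EuclideanSpace ℝ m)).card := finrank_span_finset_le_card _
    _ ≤ T.card := Finset.card_image_le



lemma IGraph_neighborFinset_inl (n j k : ℕ) [NeZero n] (hk0 : (k : ZMod n) ≠ 0)
    (h2k : (k : ZMod n) + (k : ZMod n) ≠ 0) (i : ZMod n) :
    (IGraph n j k).neighborFinset (Sum.inl i)
      = {Sum.inl (i + k), Sum.inl (i - k), Sum.inr i} := by
  ext y
  rw [SimpleGraph.mem_neighborFinset]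
  cases y with
  | inl i' =>
      have hadj : (IGraph n j k).Adj (Sum.inl i) (Sum.inl i')
          ↔ i ≠ i' ∧ (i' - i = (k : ZMod n) ∨ i - i' = (k : ZMod n)) := Iff.rfl
      rw [hadj]
      simp only [Finset.mem_insert, Finset.mem_singleton, Sum.inl.injEq, reduceCtorEq, or_false]
      constructor
      · rintro ⟨hne, h | h⟩
        · left; rw [← h]; ring
        · right; rw [← h]; ring
      · rintro (h | h)
        · subst h
          refine ⟨fun hh => hk0 ?_, Or.inl (by ring)⟩
          exact (left_eq_add.1 hh)
        · subst h
          refine ⟨fun hh => hk0 ?_, Or.inr (by ring)⟩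
          have := sub_eq_self.1 hh.symm
          exact this
  | inr i' =>
      have hadj : (IGraph n j k).Adj (Sum.inl i) (Sum.inr i') ↔ i = i' := Iff.rfl
      rw [hadj]
      simp only [Finset.mem_insert, Finset.mem_singleton, Sum.inr.injEq, reduceCtorEq,
        false_or, eq_comm]

lemma IGraph_neighborFinset_inr (n j k : ℕ) [NeZero n] (hj0 : (j : ZMod n) ≠ 0)
    (h2j : (j : ZMod n) + (j : ZMod n) ≠ 0) (i : ZMod n) :
    (IGraph n j k).neighborFinset (Sum.inr i)
      = {Sum.inr (i + j), Sum.inr (i - j), Sum.inl i} := by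
  ext y
  rw [SimpleGraph.mem_neighborFinset]
  cases y with
  | inr i' =>
      have hadj : (IGraph n j k).Adj (Sum.inr i) (Sum.inr i')
          ↔ i ≠ i' ∧ (i' - i = (j : ZMod n) ∨ i - i' = (j : ZMod n)) := Iff.rfl
      rw [hadj]
      simp only [Finset.mem_insert, Finset.mem_singleton, Sum.inr.injEq, reduceCtorEq, or_false]
      constructor
      · rintro ⟨hne, h | h⟩
        · left; rw [← h]; ring
        · right; rw [← h]; ring
      · rintro (h | h)
        · subst h
          exact ⟨fun hh => hj0 (left_eq_add.1 hh), Or.inl (by ring)⟩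
        · subst h
          exact ⟨fun hh => hj0 (sub_eq_self.1 hh.symm), Or.inr (by ring)⟩
  | inl i' =>
      have hadj : (IGraph n j k).Adj (Sum.inr i) (Sum.inl i') ↔ i = i' := Iff.rfl
      rw [hadj]
      simp only [Finset.mem_insert, Finset.mem_singleton, Sum.inl.injEq, reduceCtorEq,
        false_or, eq_comm]

lemma IGraph_eigen (n j k d : ℕ) [NeZero n] [NeZero d]
    (hdn : d ∣ n) (hdj : d ∣ j) (hdk : d ∣ k)
    (hj0 : (j : ZMod n) ≠ 0) (h2j : (j : ZMod n) + (j : ZMod n) ≠ 0)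
    (hk0 : (k : ZMod n) ≠ 0) (h2k : (k : ZMod n) + (k : ZMod n) ≠ 0) (c : ZMod d) :
    (IGraph n j k).adjMatrix ℝ *ᵥ
      (fun v => if Sum.elim (ZMod.castHom hdn (ZMod d)) (ZMod.castHom hdn (ZMod d)) v = c
        then (1:ℝ) else 0)
    = (3:ℝ) • (fun v => if Sum.elim (ZMod.castHom hdn (ZMod d)) (ZMod.castHom hdn (ZMod d)) v = c
        then (1:ℝ) else 0) := by
  set r := ZMod.castHom hdn (ZMod d) with hr
  have hzk : (k : ZMod d) = 0 := (ZMod.natCast_eq_zero_iff k d).2 hdk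
  have hzj : (j : ZMod d) = 0 := (ZMod.natCast_eq_zero_iff j d).2 hdj
  have hrk : ∀ i : ZMod n, r (i + k) = r i := by
    intro i; rw [map_add, map_natCast, hzk, add_zero]
  have hrk' : ∀ i : ZMod n, r (i - k) = r i := by
    intro i; rw [map_sub, map_natCast, hzk, sub_zero]
  have hrj : ∀ i : ZMod n, r (i + j) = r i := by
    intro i; rw [map_add, map_natCast, hzj, add_zero]
  have hrj' : ∀ i : ZMod n, r (i - j) = r i := by
    intro i; rw [map_sub, map_natCast, hzj, sub_zero]
  funext v
  cases v with
  | inl i =>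
      rw [SimpleGraph.adjMatrix_mulVec_apply, IGraph_neighborFinset_inl n j k hk0 h2k i]
      have hne1 : (Sum.inl (i+k) : ZMod n ⊕ ZMod n)
          ∉ ({Sum.inl (i-k), Sum.inr i} : Finset (ZMod n ⊕ ZMod n)) := by
        simp only [Finset.mem_insert, Finset.mem_singleton, Sum.inl.injEq, reduceCtorEq, or_false]
        intro h
        apply h2k
        calc (k : ZMod n) + k = i + k - (i - k) := by ring
          _ = 0 := sub_eq_zero.mpr h
      have hne2 : (Sum.inl (i-k) : ZMod n ⊕ ZMod n)
          ∉ ({Sum.inr i} : Finset (ZMod n ⊕ ZMod n)) := by simp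
      rw [Finset.sum_insert hne1, Finset.sum_insert hne2, Finset.sum_singleton]
      simp only [Sum.elim_inl, Sum.elim_inr, hrk, hrk', Pi.smul_apply, smul_eq_mul]
      by_cases h : r i = c <;> simp [h] <;> norm_num
  | inr i =>
      rw [SimpleGraph.adjMatrix_mulVec_apply, IGraph_neighborFinset_inr n j k hj0 h2j i]
      have hne1 : (Sum.inr (i+j) : ZMod n ⊕ ZMod n)
          ∉ ({Sum.inr (i-j), Sum.inl i} : Finset (ZMod n ⊕ ZMod n)) := by
        simp only [Finset.mem_insert, Finset.mem_singleton, Sum.inr.injEq, reduceCtorEq, or_false]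
        intro h
        apply h2j
        calc (j : ZMod n) + j = i + j - (i - j) := by ring
          _ = 0 := sub_eq_zero.mpr h
      have hne2 : (Sum.inr (i-j) : ZMod n ⊕ ZMod n)
          ∉ ({Sum.inl i} : Finset (ZMod n ⊕ ZMod n)) := by simp
      rw [Finset.sum_insert hne1, Finset.sum_insert hne2, Finset.sum_singleton]
      simp only [Sum.elim_inl, Sum.elim_inr, hrj, hrj', Pi.smul_apply, smul_eq_mul]
      by_cases h : r i = c <;> simp [h] <;> norm_num


/-- Let `d = gcd(n,j,k) > 1`. Then for each `0 ≤ q ≤ d-1`, setting `l = q·n/d`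
gives `λ_l^+ = cos(2πjl/n) + cos(2πkl/n) + √((cos(2πjl/n)-cos(2πkl/n))² + 1) = 3`;
hence `3` is an eigenvalue of `I(n,j,k)` with multiplicity at least `d`. -/
theorem IGraph_three_multiplicity (n j k : ℕ) [NeZero n] (hn : 3 ≤ n) (hj : 1 ≤ j)
    (hjk : j ≤ k) (hk : 2 * k < n) (d : ℕ) (hd : d = Nat.gcd (Nat.gcd n j) k)
    (hd1 : 1 < d) :
    (∀ q : ℕ, q ≤ d - 1 →
      Real.cos (2 * Real.pi * j * (q * (n / d)) / n) +
        Real.cos (2 * Real.pi * k * (q * (n / d)) / n) +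
        Real.sqrt ((Real.cos (2 * Real.pi * j * (q * (n / d)) / n) -
          Real.cos (2 * Real.pi * k * (q * (n / d)) / n)) ^ 2 + 1) = 3) ∧
    d ≤ ((IGraph n j k).adjMatrix ℝ).charpoly.rootMultiplicity 3 := by
  classical
  have hd0 : 0 < d := Nat.lt_of_lt_of_le Nat.zero_lt_one hd1.le
  haveI : NeZero d := ⟨hd0.ne'⟩
  have hdn : d ∣ n := hd ▸ (Nat.gcd_dvd_left n j |> fun h => dvd_trans (Nat.gcd_dvd_left _ _) h)
  have hdj : d ∣ j := hd ▸ dvd_trans (Nat.gcd_dvd_left _ _) (Nat.gcd_dvd_right n j)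
  have hdk : d ∣ k := hd ▸ Nat.gcd_dvd_right _ _
  have hk1 : 1 ≤ k := le_trans hj hjk
  have hkn : k < n := lt_of_le_of_lt (Nat.le_mul_of_pos_left k (by norm_num)) hk
  have hjn : j < n := lt_of_le_of_lt hjk hkn
  have hn0 : (n : ℝ) ≠ 0 := Nat.cast_ne_zero.mpr (NeZero.ne n)
  constructor
  · -- cosine part
    intro q hq
    have key : ∀ m : ℕ, d ∣ m →
        Real.cos (2 * Real.pi * m * (q * (n / d)) / n) = 1 := by
      intro m hdm
      have hdR : (d : ℝ) ≠ 0 := Nat.cast_ne_zero.mpr hd0.ne'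
      rw [show ((n : ℝ) / (d : ℝ)) = ((n / d : ℕ) : ℝ) from (Nat.cast_div hdn hdR).symm]
      have hnat : m * (q * (n / d)) = q * (m / d) * n := by
        obtain ⟨n', hn'⟩ := hdn
        obtain ⟨m', hm'⟩ := hdm
        subst hn' hm'
        rw [Nat.mul_div_cancel_left _ hd0, Nat.mul_div_cancel_left _ hd0]
        ring
      have key2 : ((m : ℝ)) * (q * ((n / d : ℕ) : ℝ)) = ((q * (m / d) : ℕ) : ℝ) * n := by
        have := congrArg (fun x : ℕ => (x : ℝ)) hnat
        push_cast at this
        push_cast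
        linarith [this]
      have : 2 * Real.pi * m * (q * ((n / d : ℕ) : ℝ)) / n
          = ((q * (m / d) : ℕ) : ℝ) * (2 * Real.pi) := by
        rw [mul_assoc (2 * Real.pi), key2]
        field_simp
      rw [this, Real.cos_nat_mul_two_pi]
    rw [key j hdj, key k hdk]
    norm_num
  · -- multiplicity part
    set A := (IGraph n j k).adjMatrix ℝ with hA_def
    have hA : A.IsHermitian := by
      rw [Matrix.IsHermitian, Matrix.conjTranspose_eq_transpose_of_trivial]
      exact SimpleGraph.isSymm_adjMatrix _
    have hchar : A.charpoly = (Matrix.diagonal hA.eigenvalues).charpoly := by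
      have hdiag : Matrix.diagonal (RCLike.ofReal ∘ hA.eigenvalues)
          = Matrix.diagonal hA.eigenvalues := by
        rw [RCLike.ofReal_real_eq_id]; rfl
      have hU : (hA.eigenvectorUnitary : Matrix (ZMod n ⊕ ZMod n) (ZMod n ⊕ ZMod n) ℝ)
          * star (hA.eigenvectorUnitary : Matrix (ZMod n ⊕ ZMod n) (ZMod n ⊕ ZMod n) ℝ) = 1 :=
        (Matrix.mem_unitaryGroup_iff).mp hA.eigenvectorUnitary.2
      conv_lhs => rw [hA.spectral_theorem, hdiag]
      exact my_charpoly_conj _ _ _ hU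
    have hmult : A.charpoly.rootMultiplicity 3
        = (Finset.univ.filter fun i => hA.eigenvalues i = (3:ℝ)).card := by
      rw [hchar, my_charpoly_diagonal, my_rootMult]
    rw [hmult]
    -- the eigenvectors
    have hk0 : (k : ZMod n) ≠ 0 := fun h => by
      rw [ZMod.natCast_eq_zero_iff] at h
      exact absurd (Nat.le_of_dvd (by omega) h) (by omega)
    have hj0 : (j : ZMod n) ≠ 0 := fun h => by
      rw [ZMod.natCast_eq_zero_iff] at h
      exact absurd (Nat.le_of_dvd (by omega) h) (by omega)
    have h2k : (k : ZMod n) + (k : ZMod n) ≠ 0 := fun h => by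
      rw [← Nat.cast_add, ZMod.natCast_eq_zero_iff] at h
      exact absurd (Nat.le_of_dvd (by omega) h) (by omega)
    have h2j : (j : ZMod n) + (j : ZMod n) ≠ 0 := fun h => by
      rw [← Nat.cast_add, ZMod.natCast_eq_zero_iff] at h
      exact absurd (Nat.le_of_dvd (by omega) h) (by omega)
    set r := ZMod.castHom hdn (ZMod d) with hr_def
    set w : ZMod d → (ZMod n ⊕ ZMod n) → ℝ :=
      fun c v => if Sum.elim r r v = c then (1:ℝ) else 0 with hw_def
    have heig : ∀ c, A *ᵥ w c = (3:ℝ) • w c := fun c =>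
      IGraph_eigen n j k d hdn hdj hdk hj0 h2j hk0 h2k c
    have hli : LinearIndependent ℝ w := by
      rw [Fintype.linearIndependent_iff]
      intro g hg c
      have hv : Sum.elim r r (Sum.inl ((c.val : ZMod n))) = c := by
        simp only [Sum.elim_inl, hr_def, map_natCast]
        exact ZMod.natCast_rightInverse c
      have := congrFun hg (Sum.inl ((c.val : ZMod n)))
      simp only [Finset.sum_apply, Pi.smul_apply, hw_def, smul_eq_mul, hv,
        Pi.zero_apply, mul_ite, mul_one, mul_zero] at this
      rwa [Finset.sum_ite_eq Finset.univ c g, if_pos (Finset.mem_univ c)] at this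
    have := my_geom_le A hA 3 w hli heig
    rwa [ZMod.card d] at this
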